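/- If a connected graph G of order n has r even blocks, then n + r is odd; equivalently, n and r have different parities. -/

import Mathlib

open SimpleGraph

def IsRainbowColoring {V α : Type*} (G : SimpleGraph V) (c : Sym2 V → α) : Prop :=
  ∀ u v : V, ∃ p : G.Walk u v, p.IsPath ∧ (p.edges.map c).Nodup

noncomputable def rc {V : Type*} (G : SimpleGraph V) : ℕ :=
  sInf {t : ℕ | ∃ c : Sym2 V → Fin t, IsRainbowColoring G c}

def IsBlock {V : Type*} (G : SimpleGraph V) (B : Set V) : Prop :=
  ((G.induce B).Connected ∧ ∀ v ∈ B, B ≠ {v} → (G.induce (B \ {v})).Connected) ∧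
  ∀ B' : Set V, B ⊆ B' →
    ((G.induce B').Connected ∧ ∀ v ∈ B', B' ≠ {v} → (G.induce (B' \ {v})).Connected) →
    B' = B

def TwoConnected {V : Type*} (G : SimpleGraph V) : Prop :=
  G.Connected ∧ ∀ v : V, (G.induce {u | u ≠ v}).Connected

def TwoEdgeConnected {V : Type*} (G : SimpleGraph V) : Prop :=
  G.Connected ∧ ∀ e ∈ G.edgeSet, (G.deleteEdges {e}).Connected

/-!
Induct on the number of vertices of a connected vertex set `A`. If `A` has no cut vertex, it is
its own unique block. Otherwise a cut vertex `v` splits `A` into connected pieces `A₁`, `A₂` with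
`A₁ ∩ A₂ = {v}` and no edges between `A₁ \ {v}` and `A₂ \ {v}`. Every nonseparable subset of `A`
then lies in one piece, and since `{v}` is a block of neither piece, the blocks of `A` are exactly
the blocks of `A₁` together with those of `A₂`. So the even-block counts add up while
`|A₁| + |A₂| = |A| + 1`, and the parity of `|A| + r` survives the split.
-/

theorem maximal_subset_union_iff {α : Type*} {P : Set α → Prop} {A₁ A₂ B : Set α}
    (hsplit : ∀ B, B ⊆ A₁ ∪ A₂ → P B → B ⊆ A₁ ∨ B ⊆ A₂)
    (h₁ : ∀ B ⊆ A₁ ∩ A₂, ¬ Maximal (fun B ↦ B ⊆ A₁ ∧ P B) B)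
    (h₂ : ∀ B ⊆ A₁ ∩ A₂, ¬ Maximal (fun B ↦ B ⊆ A₂ ∧ P B) B) :
    Maximal (fun B ↦ B ⊆ A₁ ∪ A₂ ∧ P B) B ↔
      Maximal (fun B ↦ B ⊆ A₁ ∧ P B) B ∨ Maximal (fun B ↦ B ⊆ A₂ ∧ P B) B := by
  constructor
  · intro hB
    rcases hsplit B hB.1.1 hB.1.2 with h | h
    · exact .inl ⟨⟨h, hB.1.2⟩, fun B' hB' ↦ hB.2 ⟨hB'.1.trans Set.subset_union_left, hB'.2⟩⟩
    · exact .inr ⟨⟨h, hB.1.2⟩, fun B' hB' ↦ hB.2 ⟨hB'.1.trans Set.subset_union_right, hB'.2⟩⟩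
  · rintro (hB | hB)
    · refine ⟨⟨hB.1.1.trans Set.subset_union_left, hB.1.2⟩, fun B' hB' hle ↦ ?_⟩
      rcases hsplit B' hB'.1 hB'.2 with h | h
      · exact hB.2 ⟨h, hB'.2⟩ hle
      · exact (h₁ B (Set.subset_inter hB.1.1 (hle.trans h)) hB).elim
    · refine ⟨⟨hB.1.1.trans Set.subset_union_right, hB.1.2⟩, fun B' hB' hle ↦ ?_⟩
      rcases hsplit B' hB'.1 hB'.2 with h | h
      · exact (h₂ B (Set.subset_inter (hle.trans h) hB.1.1) hB).elim
      · exact hB.2 ⟨h, hB'.2⟩ hle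

namespace SimpleGraph

variable {V : Type*} {G : SimpleGraph V}

lemma Walk.mem_of_mem_support_map_induce {s : Set V} {x y : s} (p : (G.induce s).Walk x y) :
    ∀ z ∈ (p.map (Embedding.induce s).toHom).support, z ∈ s := by
  simp only [Walk.support_map, List.mem_map]
  rintro _ ⟨z, -, rfl⟩
  exact z.2

lemma Walk.support_subset_of_adj_closed {s S : Set V}
    (hS : ∀ w ∈ S, ∀ x ∈ s, G.Adj w x → x ∈ S) {x y : V} (p : G.Walk x y) (hx : x ∈ S)
    (hp : ∀ z ∈ p.support, z ∈ s) : ∀ z ∈ p.support, z ∈ S := by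
  induction p with
  | nil => simpa using hx
  | cons h p ih =>
    simp only [Walk.support_cons, List.mem_cons, forall_eq_or_imp] at hp ⊢
    exact ⟨hx, ih (hS _ hx _ (hp.2 _ p.start_mem_support) h) hp.2⟩

lemma Walk.exists_support_subset_insert_of_adj_closed {A S : Set V} {v : V}
    (hS : ∀ w ∈ S, ∀ x ∈ A \ {v}, G.Adj w x → x ∈ S) {x : V} (p : G.Walk x v) (hx : x ∈ S)
    (hp : ∀ z ∈ p.support, z ∈ A) : ∃ q : G.Walk x v, ∀ z ∈ q.support, z ∈ insert v S := by
  induction p with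
  | nil => exact ⟨.nil, by simp⟩
  | @cons x y v h p ih =>
    simp only [Walk.support_cons, List.mem_cons, forall_eq_or_imp] at hp
    by_cases hyv : y = v
    · subst hyv
      exact ⟨.cons h .nil, by simp [hx]⟩
    · obtain ⟨q, hq⟩ := ih hS (hS x hx y ⟨hp.2 y p.start_mem_support, hyv⟩ h) hp.2
      refine ⟨.cons h q, ?_⟩
      simpa [hx] using hq

lemma subset_of_induce_preconnected_of_adj_closed {s S T : Set V}
    (hS : ∀ w ∈ S, ∀ x ∈ s, G.Adj w x → x ∈ S) (hT : (G.induce T).Preconnected) (hTs : T ⊆ s)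
    {x : V} (hxT : x ∈ T) (hxS : x ∈ S) : T ⊆ S := by
  intro y hyT
  obtain ⟨p⟩ := hT ⟨x, hxT⟩ ⟨y, hyT⟩
  exact (p.map _).support_subset_of_adj_closed hS hxS
    (fun z hz ↦ hTs (p.mem_of_mem_support_map_induce z hz)) y
    (Walk.end_mem_support _)

lemma induce_insert_connected_of_adj_closed {A S : Set V} {v : V}
    (hA : (G.induce A).Connected) (hv : v ∈ A) (hSA : S ⊆ A)
    (hS : ∀ w ∈ S, ∀ x ∈ A \ {v}, G.Adj w x → x ∈ S) : (G.induce (insert v S)).Connected := by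
  refine (connected_iff_exists_forall_reachable _).2 ⟨⟨v, Set.mem_insert v S⟩, ?_⟩
  rintro ⟨x, rfl | hx⟩
  · rfl
  obtain ⟨p⟩ := hA ⟨x, hSA hx⟩ ⟨v, hv⟩
  obtain ⟨q, hq⟩ := (p.map (Embedding.induce A).toHom).exists_support_subset_insert_of_adj_closed
    hS hx p.mem_of_mem_support_map_induce
  exact (q.induce _ hq).reachable.symm

lemma induce_connected_of_subsingleton {s : Set V} (hs : s.Subsingleton) (hne : s.Nonempty) :
    (G.induce s).Connected :=
  have := hs.coe_sort
  have := hne.coe_sort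
  .of_subsingleton

def IsNonseparable (G : SimpleGraph V) (B : Set V) : Prop :=
  (G.induce B).Connected ∧ ∀ v ∈ B, B ≠ {v} → (G.induce (B \ {v})).Connected

def IsBlockIn (G : SimpleGraph V) (A B : Set V) : Prop :=
  Maximal (fun B ↦ B ⊆ A ∧ G.IsNonseparable B) B

lemma isBlock_iff_isBlockIn_univ {B : Set V} : IsBlock G B ↔ G.IsBlockIn Set.univ B := by
  simp only [IsBlockIn, Set.subset_univ, true_and, maximal_iff]
  exact and_congr_right fun _ ↦
    ⟨fun h B' hB' hle ↦ (h B' hle hB').symm, fun h B' hle hB' ↦ (h hB' hle).symm⟩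

lemma isNonseparable_pair {v w : V} (h : G.Adj v w) : G.IsNonseparable {v, w} := by
  refine ⟨induce_pair_connected_of_adj h, fun u hu hne ↦ induce_connected_of_subsingleton ?_ ?_⟩
  · rintro x ⟨hx, hxu⟩ y ⟨hy, hyu⟩
    simp only [Set.mem_insert_iff, Set.mem_singleton_iff] at hu hx hxu hy hyu
    grind
  · exact Set.sdiff_nonempty.2 fun hsub ↦
      hne ((Set.insert_nonempty v {w}).subset_singleton_iff.1 hsub)

lemma isBlockIn_iff_eq_of_isNonseparable {A B : Set V} (hA : G.IsNonseparable A) :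
    G.IsBlockIn A B ↔ B = A :=
  ⟨fun hB ↦ hB.1.1.antisymm (hB.2 ⟨subset_rfl, hA⟩ hB.1.1),
    by rintro rfl; exact ⟨⟨subset_rfl, hA⟩, fun _ hB' _ ↦ hB'.1⟩⟩

lemma not_isBlockIn_of_subset_singleton {A B : Set V} {v : V} (hA : (G.induce A).Connected)
    (hv : v ∈ A) (hAv : A ≠ {v}) (hBv : B ⊆ {v}) : ¬ G.IsBlockIn A B := by
  intro hB
  have : Nontrivial A := Set.nontrivial_coe_sort.2 ((Set.nontrivial_iff_ne_singleton hv).2 hAv)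
  obtain ⟨⟨w, hw⟩, hvw⟩ := hA.preconnected.exists_adj_of_nontrivial ⟨v, hv⟩
  have hBeq : B = {v} := (Set.nonempty_coe_sort.1 hB.1.2.1.nonempty).subset_singleton_iff.1 hBv
  have hvw : G.Adj v w := hvw
  have hpair : {v, w} ⊆ A ∧ G.IsNonseparable {v, w} :=
    ⟨Set.insert_subset hv (Set.singleton_subset_iff.2 hw), isNonseparable_pair hvw⟩
  have hwB : w ∈ B := hB.2 hpair (hBeq ▸ Set.singleton_subset_iff.2 (Set.mem_insert v {w}))
    (Set.mem_insert_of_mem v rfl)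
  exact hvw.ne (hBeq ▸ hwB).symm

lemma exists_not_preconnected_of_not_isNonseparable {A : Set V} (hA : (G.induce A).Connected)
    (h : ¬ G.IsNonseparable A) : ∃ v ∈ A, ¬ (G.induce (A \ {v})).Preconnected := by
  simp only [IsNonseparable, hA, true_and, not_forall] at h
  obtain ⟨v, hv, hne, hcut⟩ := h
  obtain ⟨b, hb, hbv⟩ := ((Set.nontrivial_iff_ne_singleton hv).2 hne).exists_ne v
  have : Nonempty ↥(A \ {v}) := ⟨⟨b, hb, hbv⟩⟩
  exact ⟨v, hv, fun hpre ↦ hcut ⟨hpre⟩⟩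

structure IsSeparation (G : SimpleGraph V) (A A₁ A₂ : Set V) (v : V) : Prop where
  union_eq : A₁ ∪ A₂ = A
  inter_eq : A₁ ∩ A₂ = {v}
  connected_left : (G.induce A₁).Connected
  connected_right : (G.induce A₂).Connected
  left_ne : A₁ ≠ {v}
  right_ne : A₂ ≠ {v}
  not_adj : ∀ x ∈ A₁ \ {v}, ∀ y ∈ A₂ \ {v}, ¬ G.Adj x y

lemma exists_isSeparation {A : Set V} {v : V} (hA : (G.induce A).Connected) (hv : v ∈ A)
    (hcut : ¬ (G.induce (A \ {v})).Preconnected) : ∃ A₁ A₂, G.IsSeparation A A₁ A₂ v := by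
  obtain ⟨a, b, hab⟩ : ∃ a b, ¬ (G.induce (A \ {v})).Reachable a b := by
    simpa only [Preconnected, not_forall] using hcut
  set S := {x | ∃ hx : x ∈ A \ {v}, (G.induce (A \ {v})).Reachable a ⟨x, hx⟩}
  set T := (A \ {v}) \ S
  have hSsub : S ⊆ A \ {v} := fun x ⟨hx, _⟩ ↦ hx
  have hS : ∀ w ∈ S, ∀ x ∈ A \ {v}, G.Adj w x → x ∈ S := fun w ⟨hw, hr⟩ x hx h ↦
    ⟨hx, hr.trans (Adj.reachable (G := G.induce (A \ {v})) (u := ⟨w, hw⟩) (v := ⟨x, hx⟩) h)⟩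
  have hT : ∀ w ∈ T, ∀ x ∈ A \ {v}, G.Adj w x → x ∈ T := fun w hw x hx h ↦
    ⟨hx, fun hxS ↦ hw.2 (hS x hxS w hw.1 h.symm)⟩
  have haS : a.1 ∈ S := ⟨a.2, .rfl⟩
  have hbT : b.1 ∈ T := ⟨b.2, fun ⟨_, hr⟩ ↦ hab hr⟩
  refine ⟨insert v S, insert v T, ?_, ?_,
    induce_insert_connected_of_adj_closed hA hv (hSsub.trans Set.sdiff_subset) hS,
    induce_insert_connected_of_adj_closed hA hv (Set.sdiff_subset.trans Set.sdiff_subset) hT,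
    ?_, ?_, ?_⟩
  · rw [← Set.insert_union_distrib, Set.union_sdiff_cancel hSsub, Set.insert_sdiff_singleton,
      Set.insert_eq_of_mem hv]
  · rw [← Set.insert_inter_distrib, Set.inter_sdiff_self, LawfulSingleton.insert_empty_eq]
  · exact fun h ↦ a.2.2 (h.subset (Set.mem_insert_of_mem v haS))
  · exact fun h ↦ b.2.2 (h.subset (Set.mem_insert_of_mem v hbT))
  · rintro x ⟨hxS, hxv⟩ y ⟨hyT, hyv⟩ hxy
    have hyT : y ∈ T := hyT.resolve_left hyv
    exact hyT.2 (hS x (hxS.resolve_left hxv) y hyT.1 hxy)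

namespace IsSeparation

variable {A A₁ A₂ B : Set V} {v : V}

lemma symm (h : G.IsSeparation A A₁ A₂ v) : G.IsSeparation A A₂ A₁ v where
  union_eq := Set.union_comm A₁ A₂ ▸ h.union_eq
  inter_eq := Set.inter_comm A₁ A₂ ▸ h.inter_eq
  connected_left := h.connected_right
  connected_right := h.connected_left
  left_ne := h.right_ne
  right_ne := h.left_ne
  not_adj x hx y hy hxy := h.not_adj y hy x hx hxy.symm

lemma mem_left (h : G.IsSeparation A A₁ A₂ v) : v ∈ A₁ :=
  (h.inter_eq.symm.subset rfl).1

lemma subset_left_of_mem (h : G.IsSeparation A A₁ A₂ v) (hBA : B ⊆ A)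
    (hB : (G.induce (B \ {v})).Preconnected) {x : V} (hxB : x ∈ B) (hx : x ∈ A₁ \ {v}) :
    B ⊆ A₁ := by
  have hclosed : ∀ w ∈ A₁ \ {v}, ∀ y ∈ A \ {v}, G.Adj w y → y ∈ A₁ \ {v} := by
    intro w hw y hy hwy
    refine ⟨?_, hy.2⟩
    by_contra hyA₁
    have hyA₂ : y ∈ A₂ := (h.union_eq ▸ hy.1 : y ∈ A₁ ∪ A₂).resolve_left hyA₁
    exact h.not_adj w hw y ⟨hyA₂, hy.2⟩ hwy
  have hsub := subset_of_induce_preconnected_of_adj_closed hclosed hB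
    (Set.sdiff_subset_sdiff_left hBA) ⟨hxB, hx.2⟩ hx
  intro y hy
  by_cases hyv : y = v
  · exact hyv ▸ h.mem_left
  · exact (hsub ⟨hy, hyv⟩).1

lemma subset_or_subset (h : G.IsSeparation A A₁ A₂ v) (hBA : B ⊆ A) (hB : G.IsNonseparable B) :
    B ⊆ A₁ ∨ B ⊆ A₂ := by
  by_cases hBv : B ⊆ {v}
  · exact .inl (hBv.trans (Set.singleton_subset_iff.2 h.mem_left))
  obtain ⟨x, hxB, hxv⟩ := Set.not_subset.1 hBv
  have hconn : (G.induce (B \ {v})).Preconnected := by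
    by_cases hvB : v ∈ B
    · exact (hB.2 v hvB fun hBeq ↦ hBv hBeq.subset).preconnected
    · rw [Set.sdiff_singleton_eq_self hvB]
      exact hB.1.preconnected
  rcases (h.union_eq ▸ hBA hxB : x ∈ A₁ ∪ A₂) with hx | hx
  · exact .inl (h.subset_left_of_mem hBA hconn hxB ⟨hx, hxv⟩)
  · exact .inr (h.symm.subset_left_of_mem hBA hconn hxB ⟨hx, hxv⟩)

lemma not_isBlockIn_left_of_subset_inter (h : G.IsSeparation A A₁ A₂ v) (hB : B ⊆ A₁ ∩ A₂) :
    ¬ G.IsBlockIn A₁ B :=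
  not_isBlockIn_of_subset_singleton h.connected_left h.mem_left h.left_ne (h.inter_eq ▸ hB)

lemma isBlockIn_iff (h : G.IsSeparation A A₁ A₂ v) :
    G.IsBlockIn A B ↔ G.IsBlockIn A₁ B ∨ G.IsBlockIn A₂ B := by
  rw [IsBlockIn, ← h.union_eq]
  refine maximal_subset_union_iff (fun B' hB' hP ↦ h.subset_or_subset (h.union_eq ▸ hB') hP)
    (fun B' hB' ↦ h.not_isBlockIn_left_of_subset_inter hB')
    (fun B' hB' ↦ h.symm.not_isBlockIn_left_of_subset_inter (Set.inter_comm A₁ A₂ ▸ hB'))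

lemma not_isBlockIn_left_and_right (h : G.IsSeparation A A₁ A₂ v) :
    ¬ (G.IsBlockIn A₁ B ∧ G.IsBlockIn A₂ B) := fun ⟨h₁, h₂⟩ ↦
  h.not_isBlockIn_left_of_subset_inter (Set.subset_inter h₁.1.1 h₂.1.1) h₁

lemma ncard_add_ncard [Finite V] (h : G.IsSeparation A A₁ A₂ v) :
    A₁.ncard + A₂.ncard = A.ncard + 1 := by
  rw [← Set.ncard_union_add_ncard_inter, h.union_eq, h.inter_eq, Set.ncard_singleton]

lemma ncard_left_lt [Finite V] (h : G.IsSeparation A A₁ A₂ v) : A₁.ncard < A.ncard := by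
  have : 1 < A₂.ncard := Set.one_lt_ncard_iff_nontrivial.2
    ((Set.nontrivial_iff_ne_singleton h.symm.mem_left).2 h.right_ne)
  have := h.ncard_add_ncard
  omega

end IsSeparation

lemma odd_ncard_add_ncard_even_isBlockIn_of_isNonseparable {A : Set V} (hA : G.IsNonseparable A) :
    Odd (A.ncard + {B | G.IsBlockIn A B ∧ Even B.ncard}.ncard) := by
  simp only [isBlockIn_iff_eq_of_isNonseparable hA]
  rcases Nat.even_or_odd A.ncard with he | ho
  · have : {B : Set V | B = A ∧ Even B.ncard} = {A} := by ext; simp_all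
    simpa [this] using he.add_one
  · have : {B : Set V | B = A ∧ Even B.ncard} = ∅ := by ext; simp_all [Nat.not_even_iff_odd]
    simpa [this] using ho

theorem odd_ncard_add_ncard_even_isBlockIn [Finite V] {A : Set V} (hA : (G.induce A).Connected) :
    Odd (A.ncard + {B | G.IsBlockIn A B ∧ Even B.ncard}.ncard) := by
  by_cases hsep : G.IsNonseparable A
  · exact odd_ncard_add_ncard_even_isBlockIn_of_isNonseparable hsep
  obtain ⟨v, hv, hcut⟩ := exists_not_preconnected_of_not_isNonseparable hA hsep
  obtain ⟨A₁, A₂, h⟩ := exists_isSeparation hA hv hcut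
  have ih₁ := odd_ncard_add_ncard_even_isBlockIn h.connected_left
  have ih₂ := odd_ncard_add_ncard_even_isBlockIn h.connected_right
  have hsplit : {B | G.IsBlockIn A B ∧ Even B.ncard} =
      {B | G.IsBlockIn A₁ B ∧ Even B.ncard} ∪ {B | G.IsBlockIn A₂ B ∧ Even B.ncard} := by
    ext B
    simp only [Set.mem_ofPred_eq, Set.mem_union, h.isBlockIn_iff, or_and_right]
  have hdisj : Disjoint {B | G.IsBlockIn A₁ B ∧ Even B.ncard}
      {B | G.IsBlockIn A₂ B ∧ Even B.ncard} :=
    Set.disjoint_left.2 fun _ h₁ h₂ ↦ h.not_isBlockIn_left_and_right ⟨h₁.1, h₂.1⟩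
  rw [hsplit, Set.ncard_union_eq hdisj]
  have := h.ncard_add_ncard
  rw [Nat.odd_iff] at ih₁ ih₂ ⊢
  omega
termination_by A.ncard
decreasing_by
  · exact h.ncard_left_lt
  · exact h.symm.ncard_left_lt

end SimpleGraph

theorem card_add_even_blocks_odd {V : Type*} [Fintype V] (G : SimpleGraph V)
    (hconn : G.Connected) (r : ℕ)
    (hr : {B : Set V | IsBlock G B ∧ Even B.ncard}.ncard = r) :
    Odd (Fintype.card V + r) := by
  have huniv : (G.induce Set.univ).Connected := (induceUnivIso G).connected_iff.2 hconn
  simpa only [← hr, isBlock_iff_isBlockIn_univ, Set.ncard_univ, Nat.card_eq_fintype_card]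
    using odd_ncard_add_ncard_even_isBlockIn huniv
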